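/- arXiv:2411.01051 — 7 statements merged into one kernel-verified Lean document; each statement's English description precedes it below -/
import Mathlib

section
/- Let θ : H → M be a transfer homomorphism of cancellative commutative monoids and let c ∈ H be irreducible. If c is absolutely irreducible in H, then θ(c) is absolutely irreducible in M. -/
/-- An irreducible element is absolutely irreducible if every factorization of each of
its powers into irreducibles is essentially the same as the power of itself. -/
def AbsolutelyIrreducible {H : Type*} [CancelCommMonoid H] (r : H) : Prop :=
  Irreducible r ∧ ∀ n : ℕ, 1 ≤ n → ∀ L : Multiset H, (∀ a ∈ L, Irreducible a) →
    L.prod = r ^ n → Multiset.Rel Associated L (Multiset.replicate n r)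

/-- Transfer homomorphism of commutative (cancellative) monoids. -/
def IsTransferHom {H M : Type*} [CancelCommMonoid H] [CancelCommMonoid M] (θ : H →* M) : Prop :=
  (∀ m : M, ∃ h : H, ∃ u : M, IsUnit u ∧ m = θ h * u) ∧
  (∀ h : H, IsUnit (θ h) → IsUnit h) ∧
  (∀ u : H, ∀ b c : M, θ u = b * c →
    ∃ v w : H, u = v * w ∧ Associated (θ v) b ∧ Associated (θ w) c)

/-! A transfer homomorphism lifts every factorization of `θ x` into a factorization of `x`
with associated images; applied to `θ c ^ n = θ (c ^ n)` this carries the uniqueness of the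
factorization of `c ^ n` over to `θ c ^ n`. -/

namespace IsTransferHom

variable {H M : Type*} [CancelCommMonoid H] [CancelCommMonoid M] {θ : H →* M}

theorem isUnit_map_iff (hθ : IsTransferHom θ) {h : H} : IsUnit (θ h) ↔ IsUnit h :=
  ⟨hθ.2.1 h, fun hu => hu.map θ⟩

theorem irreducible_map_iff (hθ : IsTransferHom θ) {h : H} :
    Irreducible (θ h) ↔ Irreducible h := by
  refine ⟨fun hirr => ⟨fun hu => hirr.not_isUnit (hu.map θ), fun p q hpq => ?_⟩,
    fun hirr => ⟨fun hu => hirr.not_isUnit (hθ.isUnit_map_iff.1 hu), fun b d hbd => ?_⟩⟩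
  · exact (hirr.isUnit_or_isUnit (by rw [hpq, map_mul])).imp hθ.isUnit_map_iff.1
      hθ.isUnit_map_iff.1
  · obtain ⟨v, w, rfl, hvb, hwd⟩ := hθ.2.2 h b d hbd
    exact (hirr.isUnit_or_isUnit rfl).imp (fun hv => hvb.isUnit (hv.map θ))
      (fun hw => hwd.isUnit (hw.map θ))

theorem exists_mul_of_map_associated_mul (hθ : IsTransferHom θ) {x : H} {b d : M}
    (hx : Associated (θ x) (b * d)) :
    ∃ v w : H, x = v * w ∧ Associated (θ v) b ∧ Associated (θ w) d := by
  obtain ⟨u, hu⟩ := hx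
  have hsplit : θ x = b * (d * ↑u⁻¹) := by
    rw [← mul_assoc, ← hu, mul_assoc, Units.mul_inv, mul_one]
  obtain ⟨v, w, hvw, hvb, hwd⟩ := hθ.2.2 x b _ hsplit
  exact ⟨v, w, hvw, hvb, hwd.trans (associated_mul_unit_left d _ (Units.isUnit _))⟩

theorem exists_prod_eq_of_map_associated_prod (hθ : IsTransferHom θ) {L : Multiset M}
    (hL : L ≠ 0) {x : H} (hx : Associated (θ x) L.prod) :
    ∃ K : Multiset H, K.prod = x ∧ Multiset.Rel Associated (K.map θ) L := by
  induction L using Multiset.induction generalizing x with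
  | empty => exact absurd rfl hL
  | cons a L ih =>
    rw [Multiset.prod_cons] at hx
    obtain ⟨v, w, rfl, hva, hwL⟩ := hθ.exists_mul_of_map_associated_mul hx
    by_cases hL0 : L = 0
    · subst hL0
      have hw : IsUnit w := hθ.isUnit_map_iff.1 (associated_one_iff_isUnit.1 hwL)
      refine ⟨{v * w}, Multiset.prod_singleton _, ?_⟩
      rw [Multiset.map_singleton, map_mul, ← Multiset.cons_zero]
      exact Multiset.Rel.cons ((associated_mul_unit_left _ _ (hw.map θ)).trans hva)
        Multiset.Rel.zero
    · obtain ⟨K, rfl, hKL⟩ := ih hL0 hwL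
      refine ⟨v ::ₘ K, Multiset.prod_cons v K, ?_⟩
      rw [Multiset.map_cons]
      exact Multiset.Rel.cons hva hKL

end IsTransferHom

theorem stmt_1_general {H M : Type*} [CancelCommMonoid H] [CancelCommMonoid M] (θ : H →* M)
    (hθ : IsTransferHom θ) (c : H)
    (habs : AbsolutelyIrreducible c) : AbsolutelyIrreducible (θ c) := by
  obtain ⟨hc, hpow⟩ := habs
  refine ⟨hθ.irreducible_map_iff.2 hc, fun n hn L hLirr hL => ?_⟩
  have hL0 : L ≠ 0 := by
    rintro rfl
    rw [Multiset.prod_zero, ← map_pow] at hL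
    have hcn : IsUnit (c ^ n) := hθ.isUnit_map_iff.1 (hL ▸ isUnit_one)
    exact hc.not_isUnit ((isUnit_pow_iff (by omega)).1 hcn)
  obtain ⟨K, hKc, hKL⟩ :=
    hθ.exists_prod_eq_of_map_associated_prod hL0 (by rw [hL, map_pow])
  have hKirr : ∀ k ∈ K, Irreducible k := by
    intro k hk
    obtain ⟨a, ha, hka⟩ := Multiset.exists_mem_of_rel_of_mem hKL (Multiset.mem_map_of_mem θ hk)
    exact hθ.irreducible_map_iff.1 (hka.symm.irreducible (hLirr a ha))
  have hKθ : Multiset.Rel Associated (K.map θ) (Multiset.replicate n (θ c)) := by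
    rw [← Multiset.map_replicate]
    exact Multiset.rel_map.2 ((hpow n hn K hKirr hKc).mono fun _ _ _ _ h => h.map θ)
  have hLK : Multiset.Rel Associated L (K.map θ) :=
    (Multiset.rel_flip.2 hKL).mono fun _ _ _ _ h => h.symm
  exact hLK.trans Associated hKθ

theorem stmt_1 {H M : Type*} [CancelCommMonoid H] [CancelCommMonoid M] (θ : H →* M)
    (hθ : IsTransferHom θ) (c : H) (hc : Irreducible c)
    (habs : AbsolutelyIrreducible c) : AbsolutelyIrreducible (θ c) :=
  stmt_1_general θ hθ c habs
end

section
/- Let K be a field, let n ≥ 2, and let R = K + X^n·K[[X]] be the subring of K[[X]] consisting of power series whose coefficients of X^1, ..., X^{n-1} vanish. Then the irreducible elements of R are exactly the elements of the form u·X^m where u is a unit of K[[X]] (with u·X^m ∈ R) and n ≤ m ≤ 2n−1. -/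
/-!
Units of `R` are the series with nonzero constant term, since a unit of `K⟦X⟧` lying in `R` has
its inverse in `R`; every other element of `R` has `X`-adic order at least `n`. As the order is
additive, a product of two non-units has order at least `2n`, while a series of order at least
`2n` splits in `R` as `X ^ n` times a series of order at least `n`. So the irreducibles are the
elements of order `m` with `n ≤ m < 2n`, i.e. the `u * X ^ m` with `u` a unit of `K⟦X⟧`.
-/

open PowerSeries

theorem PowerSeries.exists_unit_mul_X_pow_iff_order_eq {K : Type*} [Field K] {f : K⟦X⟧} {m : ℕ} :
    (∃ u : K⟦X⟧ˣ, f = (u : K⟦X⟧) * X ^ m) ↔ f.order = m := by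
  constructor
  · rintro ⟨u, rfl⟩
    rw [order_mul, order_zero_of_unit u.isUnit, order_X_pow, zero_add]
  · intro h
    have hf : f ≠ 0 := fun hf => by simp [hf] at h
    refine ⟨(isUnit_divided_by_X_pow_order hf).unit, ?_⟩
    conv_lhs => rw [← X_pow_order_mul_divXPowOrder (f := f), h, ENat.toNat_natCast]
    rw [IsUnit.unit_spec, mul_comm]

/-- `R = K + X ^ n K⟦X⟧`. -/
def IsGapSubring {K : Type*} [Ring K] (n : ℕ) (R : Subring K⟦X⟧) : Prop :=
  ∀ f : K⟦X⟧, f ∈ R ↔ ∀ i : ℕ, 0 < i → i < n → coeff i f = 0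

namespace IsGapSubring

variable {K : Type*} {n : ℕ}

theorem mem_of_le_order [Ring K] {R : Subring K⟦X⟧} (hR : IsGapSubring n R)
    {f : K⟦X⟧} (hf : n ≤ f.order) : f ∈ R :=
  (hR f).mpr fun i _ hin => coeff_of_lt_order i (lt_of_lt_of_le (by exact_mod_cast hin) hf)

theorem order_eq_zero_or_le_order [Ring K] {R : Subring K⟦X⟧} (hR : IsGapSubring n R)
    {f : K⟦X⟧} (hf : f ∈ R) : f.order = 0 ∨ n ≤ f.order := by
  refine or_iff_not_imp_left.mpr fun h => nat_le_order f n fun i hi => ?_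
  rcases Nat.eq_zero_or_pos i with rfl | hi0
  · exact (coeff_zero_eq_constantCoeff_apply f).trans (order_ne_zero_iff_constCoeff_eq_zero.mp h)
  · exact (hR f).mp hf i hi0 hi

theorem mem_of_mul_eq_one [CommRing K] {R : Subring K⟦X⟧} (hR : IsGapSubring n R)
    {f g : K⟦X⟧} (hf : f ∈ R) (hfg : f * g = 1) : g ∈ R := by
  have hc : IsUnit (constantCoeff f) :=
    IsUnit.of_mul_eq_one (constantCoeff g) (by rw [← map_mul, hfg, map_one])
  refine (hR g).mpr fun i hi hin => ?_
  -- For `0 < i < n` the only surviving term of `coeff i (f * g)` is `coeff 0 f * coeff i g`.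
  have h := congrArg (coeff i) hfg
  rw [coeff_one, if_neg hi.ne', coeff_mul, Finset.sum_eq_single (0, i)] at h
  · rwa [coeff_zero_eq_constantCoeff, hc.mul_right_eq_zero] at h
  · rintro ⟨p, q⟩ hpq hne
    rw [Finset.HasAntidiagonal.mem_antidiagonal] at hpq
    have hp : 0 < p := Nat.pos_of_ne_zero fun hp => hne (by simp_all)
    rw [(hR f).mp hf p hp (by omega), zero_mul]
  · simp

theorem isUnit_iff_isUnit_coe [CommRing K] {R : Subring K⟦X⟧} (hR : IsGapSubring n R)
    (a : R) : IsUnit a ↔ IsUnit (a : K⟦X⟧) := by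
  refine ⟨fun ha => ha.map R.subtype, fun ⟨u, hu⟩ => ?_⟩
  have hinv : (↑u⁻¹ : K⟦X⟧) ∈ R := hR.mem_of_mul_eq_one (hu ▸ a.2) u.mul_inv
  exact isUnit_iff_exists_inv.mpr ⟨⟨_, hinv⟩, Subtype.ext (by simp [← hu])⟩

theorem not_isUnit_iff_le_order [Field K] {R : Subring K⟦X⟧} (hR : IsGapSubring n R)
    (hn : 0 < n) (a : R) : ¬IsUnit a ↔ n ≤ (a : K⟦X⟧).order := by
  rw [hR.isUnit_iff_isUnit_coe, isUnit_iff_constantCoeff, isUnit_iff_ne_zero, not_not,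
    ← order_ne_zero_iff_constCoeff_eq_zero]
  refine ⟨(hR.order_eq_zero_or_le_order a.2).resolve_left, fun h h0 => ?_⟩
  rw [h0, nonpos_iff_eq_zero, Nat.cast_eq_zero] at h
  omega

theorem irreducible_iff_order [Field K] {R : Subring K⟦X⟧} (hR : IsGapSubring n R)
    (hn : 0 < n) (r : R) :
    Irreducible r ↔ n ≤ (r : K⟦X⟧).order ∧ (r : K⟦X⟧).order < 2 * n := by
  constructor
  · intro hr
    have hlo := (hR.not_isUnit_iff_le_order hn r).mp hr.not_isUnit
    refine ⟨hlo, lt_of_not_ge fun hhi => ?_⟩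
    obtain ⟨g, hg⟩ : X ^ n ∣ (r : K⟦X⟧) := X_pow_dvd_iff.mpr fun i hi =>
      coeff_of_lt_order i (lt_of_lt_of_le (by exact_mod_cast hi.trans_le (by omega)) hhi)
    have hg_order : n ≤ g.order := by
      rw [hg, order_mul, order_X_pow, two_mul] at hhi
      exact (ENat.add_le_add_iff_left (ENat.natCast_ne_top n)).mp hhi
    have hXn_order : n ≤ ((X : K⟦X⟧) ^ n).order := (order_X_pow n).ge
    rcases hr.isUnit_or_isUnit (a := ⟨_, hR.mem_of_le_order hXn_order⟩)
      (b := ⟨g, hR.mem_of_le_order hg_order⟩) (Subtype.ext hg) with h | h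
    · exact (hR.not_isUnit_iff_le_order hn _).mpr hXn_order h
    · exact (hR.not_isUnit_iff_le_order hn _).mpr hg_order h
  · rintro ⟨hlo, hhi⟩
    refine ⟨(hR.not_isUnit_iff_le_order hn r).mpr hlo, fun a b hab => ?_⟩
    by_contra! h
    have ha := (hR.not_isUnit_iff_le_order hn a).mp h.1
    have hb := (hR.not_isUnit_iff_le_order hn b).mp h.2
    rw [hab, Subring.coe_mul, order_mul, two_mul] at hhi
    exact (add_le_add ha hb).not_gt hhi

end IsGapSubring

theorem stmt_4 {K : Type*} [Field K] (n : ℕ) (hn : 2 ≤ n)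
    (R : Subring (PowerSeries K))
    (hR : ∀ f : PowerSeries K, f ∈ R ↔ ∀ i : ℕ, 0 < i → i < n → PowerSeries.coeff i f = 0)
    (r : R) :
    Irreducible r ↔ ∃ (u : (PowerSeries K)ˣ) (m : ℕ),
      n ≤ m ∧ m ≤ 2 * n - 1 ∧
      (r : PowerSeries K) = (u : PowerSeries K) * PowerSeries.X ^ m := by
  rw [IsGapSubring.irreducible_iff_order hR (by omega) r]
  constructor
  · rintro ⟨hlo, hhi⟩
    obtain ⟨m, hm⟩ := ENat.ne_top_iff_exists.mp (hhi.trans_le le_top).ne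
    rw [← hm] at hlo hhi
    norm_cast at hlo hhi
    obtain ⟨u, hu⟩ := exists_unit_mul_X_pow_iff_order_eq.mpr hm.symm
    exact ⟨u, m, hlo, by omega, hu⟩
  · rintro ⟨u, m, hnm, hm, hu⟩
    rw [exists_unit_mul_X_pow_iff_order_eq.mp ⟨u, hu⟩]
    exact ⟨by exact_mod_cast hnm, by exact_mod_cast (by omega : m < 2 * n)⟩
end

section
/- Let K₁ ⊊ K₂ be fields and R = K₁ + X·K₂[[X]] = {f ∈ K₂[[X]] : f(0) ∈ K₁}. Then R has no prime elements and no absolutely irreducible elements; in particular, for any irreducible r = u·X^m of R and any c ∈ K₂ \ K₁, the factorization r² = (uc·X^m)·(uc^{-1}·X^m) is essentially different from r·r. -/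
/-!
Every non-unit of `R` has constant coefficient `0`, so for an irreducible `r` and any `d ≠ 0` in `K`
the series `C d * r` again lies in `R` and is irreducible there, while `r ∣ C d * r` in `R` would force
`d ∈ K₁`. For `c ∉ K₁` the factorization `r ^ 2 = (C c * r) * (C c⁻¹ * r)` therefore has factors not
associated to `r`, and `r` divides neither of them, so `r` is not prime either.
-/

open PowerSeries

namespace PowerSeries.ConstantCoeffSubring

variable {K : Type*} [Field K] {K₁ : Subfield K} {R : Subring K⟦X⟧}

theorem isUnit_iff_constantCoeff_ne_zero
    (hR : ∀ f : K⟦X⟧, f ∈ R ↔ constantCoeff f ∈ K₁) (f : R) :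
    IsUnit f ↔ constantCoeff (f : K⟦X⟧) ≠ 0 := by
  refine ⟨fun hf => ?_, fun hf => ?_⟩
  · rw [← isUnit_iff_ne_zero, ← isUnit_iff_constantCoeff]
    exact hf.map R.subtype
  · have hinv : (f : K⟦X⟧)⁻¹ ∈ R := by
      rw [hR, constantCoeff_inv]
      exact K₁.inv_mem ((hR _).mp f.2)
    exact IsUnit.of_mul_eq_one (⟨_, hinv⟩ : R) (Subtype.ext (PowerSeries.mul_inv_cancel _ hf))

theorem constantCoeff_eq_zero_of_not_isUnit
    (hR : ∀ f : K⟦X⟧, f ∈ R ↔ constantCoeff f ∈ K₁) {f : R} (hf : ¬IsUnit f) :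
    constantCoeff (f : K⟦X⟧) = 0 := by
  simpa [isUnit_iff_constantCoeff_ne_zero hR] using hf

theorem exists_coe_eq_C_mul
    (hR : ∀ f : K⟦X⟧, f ∈ R ↔ constantCoeff f ∈ K₁) {r : R}
    (hr : constantCoeff (r : K⟦X⟧) = 0) (d : K) :
    ∃ s : R, (s : K⟦X⟧) = C d * r :=
  ⟨⟨C d * r, by simp [hR, hr, K₁.zero_mem]⟩, rfl⟩

theorem not_dvd_of_coe_eq_C_mul
    (hR : ∀ f : K⟦X⟧, f ∈ R ↔ constantCoeff f ∈ K₁) {r s : R} (hr : r ≠ 0)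
    {d : K} (hd : d ∉ K₁) (hs : (s : K⟦X⟧) = C d * r) : ¬r ∣ s := by
  rintro ⟨q, rfl⟩
  have hq : (q : K⟦X⟧) = C d := by
    refine mul_left_cancel₀ (fun h => hr (Subtype.ext h)) ?_
    rw [← Subring.coe_mul, hs, mul_comm]
  exact hd (by simpa [hq] using (hR q).mp q.2)

theorem isUnit_of_coe_mul_eq_C_mul
    (hR : ∀ f : K⟦X⟧, f ∈ R ↔ constantCoeff f ∈ K₁) {r a b : R} (hr : Irreducible r)
    {d : K} (hd : d ≠ 0) (hab : ((a * b : R) : K⟦X⟧) = C d * r)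
    (ha : constantCoeff (a : K⟦X⟧) = 0) : IsUnit b := by
  obtain ⟨a', ha'⟩ := exists_coe_eq_C_mul hR ha d⁻¹
  have hr_eq : r = a' * b := by
    apply Subtype.ext
    rw [Subring.coe_mul, ha', mul_assoc, ← Subring.coe_mul, hab, ← mul_assoc, ← map_mul,
      inv_mul_cancel₀ hd, map_one, one_mul]
  refine (hr.isUnit_or_isUnit hr_eq).resolve_left fun hu => ?_
  exact (isUnit_iff_constantCoeff_ne_zero hR a').mp hu (by simp [ha', ha])

theorem irreducible_of_coe_eq_C_mul
    (hR : ∀ f : K⟦X⟧, f ∈ R ↔ constantCoeff f ∈ K₁) {r s : R} (hr : Irreducible r)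
    {d : K} (hd : d ≠ 0) (hs : (s : K⟦X⟧) = C d * r) : Irreducible s := by
  have hr₀ := constantCoeff_eq_zero_of_not_isUnit hR hr.not_isUnit
  have hs₀ : constantCoeff (s : K⟦X⟧) = 0 := by simp [hs, hr₀]
  refine ⟨fun hu => (isUnit_iff_constantCoeff_ne_zero hR s).mp hu hs₀, fun a b hab => ?_⟩
  have hab' : ((a * b : R) : K⟦X⟧) = C d * r := hab ▸ hs
  have hab₀ : constantCoeff (a : K⟦X⟧) * constantCoeff (b : K⟦X⟧) = 0 := by
    rw [← map_mul, ← Subring.coe_mul, ← hab, hs₀]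
  rcases mul_eq_zero.mp hab₀ with ha | hb
  · exact Or.inr (isUnit_of_coe_mul_eq_C_mul hR hr hd hab' ha)
  · exact Or.inl (isUnit_of_coe_mul_eq_C_mul hR hr hd (by rwa [mul_comm]) hb)

theorem exists_essentially_different_factorization_sq
    (hR : ∀ f : K⟦X⟧, f ∈ R ↔ constantCoeff f ∈ K₁) {r : R} (hr : Irreducible r)
    {c : K} (hc : c ∉ K₁) :
    ∃ s t : R, (s : K⟦X⟧) = C c * r ∧ (t : K⟦X⟧) = C c⁻¹ * r ∧
      s * t = r ^ 2 ∧ Irreducible s ∧ Irreducible t ∧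
      ¬Multiset.Rel Associated ({s, t} : Multiset R) (Multiset.replicate 2 r) := by
  have hc₀ : c ≠ 0 := fun h => hc (h ▸ K₁.zero_mem)
  have hr₀ := constantCoeff_eq_zero_of_not_isUnit hR hr.not_isUnit
  obtain ⟨s, hs⟩ := exists_coe_eq_C_mul hR hr₀ c
  obtain ⟨t, ht⟩ := exists_coe_eq_C_mul hR hr₀ c⁻¹
  have hst : s * t = r ^ 2 := by
    apply Subtype.ext
    rw [Subring.coe_mul, Subring.coe_pow, hs, ht, mul_mul_mul_comm, ← map_mul,
      mul_inv_cancel₀ hc₀, map_one, one_mul, sq]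
  refine ⟨s, t, hs, ht, hst, irreducible_of_coe_eq_C_mul hR hr hc₀ hs,
    irreducible_of_coe_eq_C_mul hR hr (inv_ne_zero hc₀) ht, fun hrel => ?_⟩
  have hsr : Associated s r := (Multiset.rel_replicate_right.mp hrel).2 s (by simp)
  exact not_dvd_of_coe_eq_C_mul hR hr.ne_zero hc hs hsr.symm.dvd

theorem not_prime
    (hR : ∀ f : K⟦X⟧, f ∈ R ↔ constantCoeff f ∈ K₁) {c : K} (hc : c ∉ K₁) (r : R) :
    ¬Prime r := by
  intro hp
  obtain ⟨s, t, hs, ht, hst, -⟩ :=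
    exists_essentially_different_factorization_sq hR hp.irreducible hc
  have hc' : c⁻¹ ∉ K₁ := fun h => hc (by simpa using K₁.inv_mem h)
  rcases hp.dvd_or_dvd (hst ▸ dvd_pow_self r two_ne_zero) with hrs | hrt
  · exact not_dvd_of_coe_eq_C_mul hR hp.ne_zero hc hs hrs
  · exact not_dvd_of_coe_eq_C_mul hR hp.ne_zero hc' ht hrt

theorem not_absolutelyIrreducible
    (hR : ∀ f : K⟦X⟧, f ∈ R ↔ constantCoeff f ∈ K₁) {c : K} (hc : c ∉ K₁) {r : R}
    (hr : Irreducible r) :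
    ¬∀ t : ℕ, 1 ≤ t → ∀ L : Multiset R, (∀ a ∈ L, Irreducible a) → L.prod = r ^ t →
      Multiset.Rel Associated L (Multiset.replicate t r) := by
  intro H
  obtain ⟨s, t, -, -, hst, hs, ht, hrel⟩ :=
    exists_essentially_different_factorization_sq hR hr hc
  refine hrel (H 2 one_le_two {s, t} ?_ (by simpa using hst))
  simpa using ⟨hs, ht⟩

end PowerSeries.ConstantCoeffSubring

open PowerSeries.ConstantCoeffSubring in
theorem stmt_6 {K : Type*} [Field K] (K₁ : Subfield K) (hK₁ : K₁ ≠ ⊤)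
    (R : Subring (PowerSeries K))
    (hR : ∀ f : PowerSeries K, f ∈ R ↔ PowerSeries.constantCoeff f ∈ K₁) :
    (∀ r : R, ¬ Prime r) ∧
    (∀ r : R, Irreducible r →
      ¬ (∀ (t : ℕ), 1 ≤ t → ∀ L : Multiset R, (∀ a ∈ L, Irreducible a) → L.prod = r ^ t →
          Multiset.Rel Associated L (Multiset.replicate t r))) ∧
    (∀ r : R, Irreducible r → ∀ c : K, c ∉ K₁ →
      ∃ s t : R, (s : PowerSeries K) = PowerSeries.C c * (r : PowerSeries K) ∧
        (t : PowerSeries K) = PowerSeries.C c⁻¹ * (r : PowerSeries K) ∧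
        s * t = r ^ 2 ∧ Irreducible s ∧ Irreducible t ∧
        ¬ Multiset.Rel Associated ({s, t} : Multiset R) (Multiset.replicate 2 r)) := by
  obtain ⟨c, hc⟩ := SetLike.exists_not_mem_of_ne_top K₁ hK₁
  exact ⟨not_prime hR hc, fun r hr => not_absolutelyIrreducible hR hc hr,
    fun r hr c hc => exists_essentially_different_factorization_sq hR hr hc⟩
end

section
/- The ring Int(ℤ) of integer-valued polynomials has no prime elements. -/
/-!
An element of Int(ℤ) is determined by its values at the integers, and a positive integer `d`
divides `g` in Int(ℤ) exactly when it divides every value of `g`. Let `f` be prime. As `f` is not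
a unit, some value `f(n)` is not `±1`, so a prime `q` divides `f(n)`. By Fermat,
`f · (f ^ (q - 1) - 1) = q · h` in Int(ℤ), hence `f ∣ q` or `f ∣ h`. If `f ∣ h`, cancelling `f`
shows `q ∣ f(n) ^ (q - 1) - 1`, which is impossible as `q ∣ f(n)`. If `f ∣ q`, then `f` is a
constant; it divides `q ∣ X · (X ^ (q - 1) - 1)`, hence divides `X` or `X ^ (q - 1) - 1`, whose
values at `1` resp. `0` are units, so the constant value of `f` is a unit.
-/

open Polynomial

def intValuedPoly : Subring ℚ[X] where
  carrier := {f | ∀ n : ℤ, ∃ m : ℤ, f.eval (n : ℚ) = m}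
  zero_mem' _ := ⟨0, by simp⟩
  one_mem' _ := ⟨1, by simp⟩
  add_mem' hf hg n := by
    obtain ⟨a, ha⟩ := hf n
    obtain ⟨b, hb⟩ := hg n
    exact ⟨a + b, by simp [ha, hb]⟩
  mul_mem' hf hg n := by
    obtain ⟨a, ha⟩ := hf n
    obtain ⟨b, hb⟩ := hg n
    exact ⟨a * b, by simp [ha, hb]⟩
  neg_mem' hf n := by
    obtain ⟨a, ha⟩ := hf n
    exact ⟨-a, by simp [ha]⟩

namespace intValuedPoly

noncomputable def evalInt (n : ℤ) : intValuedPoly →+* ℤ where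
  toFun g := (g.2 n).choose
  map_one' := Int.cast_injective (α := ℚ) <| by
    rw [← ((1 : intValuedPoly).2 n).choose_spec]; simp
  map_mul' f g := Int.cast_injective (α := ℚ) <| by
    rw [Int.cast_mul, ← ((f * g).2 n).choose_spec, ← (f.2 n).choose_spec, ← (g.2 n).choose_spec]
    simp
  map_zero' := Int.cast_injective (α := ℚ) <| by
    rw [← ((0 : intValuedPoly).2 n).choose_spec]; simp
  map_add' f g := Int.cast_injective (α := ℚ) <| by
    rw [Int.cast_add, ← ((f + g).2 n).choose_spec, ← (f.2 n).choose_spec, ← (g.2 n).choose_spec]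
    simp

@[simp]
lemma cast_evalInt (n : ℤ) (g : intValuedPoly) : (evalInt n g : ℚ) = (g : ℚ[X]).eval (n : ℚ) :=
  (g.2 n).choose_spec.symm

lemma ext_evalInt {f g : intValuedPoly} (h : ∀ n, evalInt n f = evalInt n g) : f = g := by
  refine Subtype.ext <| eq_of_infinite_eval_eq _ _ <|
    (Set.infinite_range_of_injective Int.cast_injective).mono ?_
  rintro _ ⟨n, rfl⟩
  simpa using congrArg (Int.cast (R := ℚ)) (h n)

lemma exists_not_isUnit_evalInt {f : intValuedPoly} (hf : ¬IsUnit f) :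
    ∃ n, ¬IsUnit (evalInt n f) := by
  by_contra! h
  refine hf (IsUnit.of_mul_eq_one f <| ext_evalInt fun n => ?_)
  rcases Int.isUnit_iff.mp (h n) with h1 | h1 <;> simp [h1]

lemma natCast_dvd_iff {d : ℕ} (hd : d ≠ 0) {g : intValuedPoly} :
    (d : intValuedPoly) ∣ g ↔ ∀ n, (d : ℤ) ∣ evalInt n g := by
  refine ⟨fun h n => by simpa using map_dvd (evalInt n) h, fun h => ?_⟩
  refine ⟨⟨C (d : ℚ)⁻¹ * g, fun n => ?_⟩, Subtype.ext ?_⟩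
  · obtain ⟨m, hm⟩ := h n
    refine ⟨m, ?_⟩
    rw [eval_mul, eval_C, ← cast_evalInt, hm]
    push_cast
    field_simp
  · rw [Subring.coe_mul, Subring.coe_natCast, ← C_eq_natCast, ← mul_assoc, ← C_mul,
      mul_inv_cancel₀ (by exact_mod_cast hd), C_1, one_mul]

lemma natCast_dvd_mul_pow_sub_one {q : ℕ} (hq : q.Prime) (g : intValuedPoly) :
    (q : intValuedPoly) ∣ g * (g ^ (q - 1) - 1) := by
  rw [mul_sub, mul_one, mul_pow_sub_one hq.ne_zero]
  exact (natCast_dvd_iff hq.ne_zero).mpr fun n => by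
    simpa using (Int.ModEq.pow_prime_eq_self hq (evalInt n g)).symm.dvd

noncomputable def X : intValuedPoly := ⟨Polynomial.X, fun n => ⟨n, eval_X⟩⟩

@[simp]
lemma evalInt_X (n : ℤ) : evalInt n X = n :=
  Int.cast_injective (α := ℚ) <| by simp [intValuedPoly.X]

lemma evalInt_eq_of_dvd_natCast {d : ℕ} (hd : d ≠ 0) {f : intValuedPoly}
    (h : f ∣ (d : intValuedPoly)) (m n : ℤ) : evalInt m f = evalInt n f := by
  obtain ⟨g, hg⟩ := h
  have hfg : (f : ℚ[X]) * g = C (d : ℚ) := by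
    rw [C_eq_natCast, ← Subring.coe_natCast, hg, Subring.coe_mul]
  have hd' : C (d : ℚ) ≠ 0 := by simpa using hd
  have hdeg : (f : ℚ[X]).natDegree = 0 := by
    have := natDegree_mul (left_ne_zero_of_mul (hfg ▸ hd')) (right_ne_zero_of_mul (hfg ▸ hd'))
    rw [hfg, natDegree_C] at this
    omega
  apply Int.cast_injective (α := ℚ)
  rw [cast_evalInt, cast_evalInt, eq_C_of_natDegree_eq_zero hdeg]
  simp

lemma isUnit_evalInt_of_prime_of_dvd_natCast {f : intValuedPoly} (hf : Prime f) {q : ℕ}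
    (hq : q.Prime) (hfq : f ∣ (q : intValuedPoly)) (n : ℤ) : IsUnit (evalInt n f) := by
  have hX : f ∣ X * (X ^ (q - 1) - 1) := hfq.trans (natCast_dvd_mul_pow_sub_one hq X)
  rw [evalInt_eq_of_dvd_natCast hq.ne_zero hfq n 0]
  rcases hf.dvd_or_dvd hX with h | h
  · rw [evalInt_eq_of_dvd_natCast hq.ne_zero hfq 0 1]
    exact isUnit_of_dvd_one (by simpa using map_dvd (evalInt 1) h)
  · refine isUnit_of_dvd_one ((map_dvd (evalInt 0) h).trans ?_)
    simp [zero_pow (Nat.sub_ne_zero_of_lt hq.one_lt)]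

end intValuedPoly

lemma not_dvd_pow_sub_one_of_dvd {α : Type*} [CommRing α] {p a : α} (hp : ¬IsUnit p)
    (ha : p ∣ a) {k : ℕ} (hk : k ≠ 0) : ¬p ∣ a ^ k - 1 := fun h =>
  hp (isUnit_of_dvd_one (by simpa using dvd_sub (dvd_pow ha hk) h))

open intValuedPoly in
theorem stmt_8 (R : Subring (Polynomial ℚ))
    (hR : ∀ f : Polynomial ℚ, f ∈ R ↔ ∀ n : ℤ, ∃ m : ℤ, f.eval (n : ℚ) = (m : ℚ)) :
    ∀ f : R, ¬ Prime f := by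
  obtain rfl : R = intValuedPoly := Subring.ext hR
  intro f hf
  obtain ⟨n, hn⟩ := exists_not_isUnit_evalInt hf.not_isUnit
  obtain ⟨q, hq, hqn⟩ := Nat.exists_prime_and_dvd (Int.isUnit_iff_natAbs_eq.not.mp hn)
  obtain ⟨h, hfh⟩ := natCast_dvd_mul_pow_sub_one hq f
  rcases hf.dvd_or_dvd ⟨_, hfh.symm⟩ with hfq | ⟨k, rfl⟩
  · exact hn (isUnit_evalInt_of_prime_of_dvd_natCast hf hq hfq n)
  · have hqg : (q : intValuedPoly) ∣ f ^ (q - 1) - 1 :=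
      ⟨k, mul_left_cancel₀ hf.ne_zero (by rw [hfh]; ring)⟩
    refine not_dvd_pow_sub_one_of_dvd (Nat.prime_iff_prime_int.mp hq).not_isUnit
      (Int.natCast_dvd.mpr hqn) (Nat.sub_ne_zero_of_lt hq.one_lt) ?_
    simpa using (natCast_dvd_iff hq.ne_zero).mp hqg n
end

section
/- The polynomial f(x) = x(x²+3)/2 lies in Int(ℤ), is irreducible in Int(ℤ), but is not absolutely irreducible: f² = (x²(x²+3)/4)·(x²+3) is a factorization of f² in Int(ℤ) essentially different from f·f. -/
/-!
If `a * b = C r * (X ^ k * q)` in `ℚ[X]` with `q` prime, then up to constants `a = X ^ i * q ^ j`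
and `b` is the complementary factor, so `a.eval n₁ * b.eval n₂ = r * n₁ ^ i * q(n₁) ^ j *
n₂ ^ (k - i) * q(n₂) ^ (1 - j)`. When `a` and `b` are integer-valued this is an integer for all
integers `n₁, n₂`; one pair for which it is not rules the split out. A constant factor divides
every value, hence is `±1` once two values are coprime. This shows that `x(x²+3)/2`,
`x²(x²+3)/4` and `x²+3` are irreducible in `Int(ℤ)`, and the two factorisations of `f²` differ
because association preserves degrees.
-/

open Polynomial

def IsIntValued (p : ℚ[X]) : Prop := ∀ n : ℤ, ∃ m : ℤ, p.eval (n : ℚ) = m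

theorem pow_mul_pow_mul_pow_sub_mul_pow_sub {M : Type*} [CommMonoid M] (x y : M) {i j k l : ℕ}
    (hi : i ≤ k) (hj : j ≤ l) : x ^ i * y ^ j * (x ^ (k - i) * y ^ (l - j)) = x ^ k * y ^ l := by
  rw [mul_mul_mul_comm, ← pow_add, ← pow_add, Nat.add_sub_cancel' hi, Nat.add_sub_cancel' hj]

section Field
variable {K : Type*} [Field K]

theorem exists_associated_of_mul_eq_C_mul_X_pow_mul {q a b : K[X]} (hq : Prime q) {k : ℕ}
    {r : K} (hr : r ≠ 0) (hab : a * b = C r * (X ^ k * q)) :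
    ∃ i ≤ k, ∃ j ≤ 1,
      Associated a (X ^ i * q ^ j) ∧ Associated b (X ^ (k - i) * q ^ (1 - j)) := by
  have hdvd : a ∣ X ^ k * q ^ 1 := ⟨C r⁻¹ * b, by
    rw [pow_one, ← mul_assoc, mul_comm a, mul_assoc, hab, ← mul_assoc, ← C_mul,
      inv_mul_cancel₀ hr, C_1, one_mul]⟩
  obtain ⟨a₁, a₂, ha₁, ha₂, rfl⟩ := exists_dvd_and_dvd_of_dvd_mul hdvd
  obtain ⟨i, hi, hai⟩ := (dvd_prime_pow prime_X k).1 ha₁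
  obtain ⟨j, hj, haj⟩ := (dvd_prime_pow hq 1).1 ha₂
  have ha : Associated (a₁ * a₂) (X ^ i * q ^ j) := hai.mul_mul haj
  refine ⟨i, hi, j, hj, ha, Associated.of_mul_left ?_ ha ?_⟩
  · rw [hab, pow_mul_pow_mul_pow_sub_mul_pow_sub X q hi hj, pow_one]
    exact (associated_unit_mul_left _ _ (isUnit_C.2 hr.isUnit))
  · intro h0
    rw [h0, zero_mul] at hab
    exact (mul_ne_zero (C_ne_zero.2 hr) (mul_ne_zero (pow_ne_zero _ X_ne_zero) hq.ne_zero)) hab.symm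

theorem eval_mul_eval_of_associated {a b A B : K[X]} {r : K} (hAB : A * B ≠ 0)
    (hab : a * b = C r * (A * B)) (ha : Associated a A) (hb : Associated b B) (x y : K) :
    a.eval x * b.eval y = r * A.eval x * B.eval y := by
  obtain ⟨u, rfl⟩ := ha.symm
  obtain ⟨v, rfl⟩ := hb.symm
  obtain ⟨c, -, hc⟩ := isUnit_iff.1 u.isUnit
  obtain ⟨d, -, hd⟩ := isUnit_iff.1 v.isUnit
  have hcd : c * d = r := by
    apply C_injective
    apply mul_right_cancel₀ hAB
    rw [← hab, C_mul, hc, hd]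
    ring
  simp only [eval_mul, ← hc, ← hd, eval_C]
  rw [← hcd]
  ring

end Field

theorem intCast_div_ne_intCast {a b : ℤ} (hb : b ≠ 0) (hab : ¬ b ∣ a) :
    ∀ z : ℤ, (a / b : ℚ) ≠ z := by
  intro z h
  rw [div_eq_iff (Int.cast_ne_zero.2 hb)] at h
  exact hab ⟨z, by exact_mod_cast h.trans (mul_comm _ _)⟩

theorem false_of_isIntValued_of_mul_eq_C_mul_X_pow_mul {q : ℚ[X]} (hq : Prime q) {k : ℕ} {r : ℚ}
    (hr : r ≠ 0)
    (hwit : ∀ i ≤ k, ∀ j ≤ 1, (i, j) ≠ (0, 0) → (i, j) ≠ (k, 1) → ∃ n₁ n₂ : ℤ, ∀ z : ℤ,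
      r * ((n₁ : ℚ) ^ i * q.eval (n₁ : ℚ) ^ j) *
        ((n₂ : ℚ) ^ (k - i) * q.eval (n₂ : ℚ) ^ (1 - j)) ≠ z)
    {a b : ℚ[X]} (hab : a * b = C r * (X ^ k * q)) (ha : ¬IsUnit a) (hb : ¬IsUnit b)
    (haZ : IsIntValued a) (hbZ : IsIntValued b) : False := by
  obtain ⟨i, hi, j, hj, hai, hbj⟩ := exists_associated_of_mul_eq_C_mul_X_pow_mul hq hr hab
  have hij : (i, j) ≠ (0, 0) := by
    rintro ⟨⟩
    exact ha (associated_one_iff_isUnit.1 (by simpa using hai))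
  have hij' : (i, j) ≠ (k, 1) := by
    rintro ⟨⟩
    exact hb (associated_one_iff_isUnit.1 (by simpa using hbj))
  obtain ⟨n₁, n₂, hn⟩ := hwit i hi j hj hij hij'
  obtain ⟨z₁, hz₁⟩ := haZ n₁
  obtain ⟨z₂, hz₂⟩ := hbZ n₂
  refine hn (z₁ * z₂) ?_
  have hXq := pow_mul_pow_mul_pow_sub_mul_pow_sub X q hi hj
  rw [pow_one] at hXq
  have heval := eval_mul_eval_of_associated
    (by rw [hXq]; exact mul_ne_zero (pow_ne_zero _ X_ne_zero) hq.ne_zero) (hXq ▸ hab) hai hbj n₁ n₂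
  rw [hz₁, hz₂] at heval
  push_cast
  rw [heval]
  simp [eval_mul, eval_pow, mul_assoc]

section IntValued
variable (R : Subring ℚ[X]) (hR : ∀ f : ℚ[X], f ∈ R ↔ IsIntValued f)
include hR

theorem isUnit_of_isUnit_coe_of_mul_eq {a b p : R} (hab : a * b = p) (ha : IsUnit (a : ℚ[X]))
    (hcop : ∃ n₁ n₂ z₁ z₂ : ℤ, (p : ℚ[X]).eval (n₁ : ℚ) = z₁ ∧ (p : ℚ[X]).eval (n₂ : ℚ) = z₂ ∧
      IsCoprime z₁ z₂) :
    IsUnit a := by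
  obtain ⟨n₁, n₂, z₁, z₂, hz₁, hz₂, hz⟩ := hcop
  obtain ⟨c, -, hc⟩ := isUnit_iff.1 ha
  obtain ⟨m, hm⟩ := (hR a).1 a.2 0
  rw [← hc, eval_C] at hm
  have hdvd : ∀ {n z : ℤ}, (p : ℚ[X]).eval (n : ℚ) = z → m ∣ z := by
    intro n z hnz
    obtain ⟨w, hw⟩ := (hR b).1 b.2 n
    refine ⟨w, ?_⟩
    rw [← hab, Subring.coe_mul, eval_mul, ← hc, eval_C, hm, hw] at hnz
    exact_mod_cast hnz.symm
  have hm1 : m * m = 1 := Int.isUnit_mul_self (hz.isUnit_of_dvd' (hdvd hz₁) (hdvd hz₂))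
  refine IsUnit.of_mul_eq_one a (Subtype.ext ?_)
  rw [Subring.coe_mul, ← hc, ← C_mul, hm, ← Int.cast_mul, hm1, Int.cast_one, C_1, Subring.coe_one]

theorem irreducible_of_isCoprime_eval_of_forall_not_split {p : R}
    (hp : 0 < (p : ℚ[X]).natDegree)
    (hcop : ∃ n₁ n₂ z₁ z₂ : ℤ, (p : ℚ[X]).eval (n₁ : ℚ) = z₁ ∧ (p : ℚ[X]).eval (n₂ : ℚ) = z₂ ∧
      IsCoprime z₁ z₂)
    (hsplit : ∀ a b : ℚ[X], a * b = p → ¬IsUnit a → ¬IsUnit b → IsIntValued a → IsIntValued b →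
      False) :
    Irreducible p where
  not_isUnit hu := hp.ne' (natDegree_eq_zero_of_isUnit (hu.map R.subtype))
  isUnit_or_isUnit a b hab := by
    by_cases ha : IsUnit (a : ℚ[X])
    · exact .inl (isUnit_of_isUnit_coe_of_mul_eq R hR hab.symm ha hcop)
    by_cases hb : IsUnit (b : ℚ[X])
    · exact .inr (isUnit_of_isUnit_coe_of_mul_eq R hR ((mul_comm b a).trans hab.symm) hb hcop)
    exact (hsplit a b (by rw [hab, Subring.coe_mul]) ha hb ((hR a).1 a.2) ((hR b).1 b.2)).elim

end IntValued

theorem prime_X_sq_add_three : Prime (X ^ 2 + C 3 : ℚ[X]) := by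
  refine (irreducible_of_degree_le_three_of_not_isRoot ?_ fun x hx => ?_).prime
  · rw [natDegree_X_pow_add_C]; decide
  · have : x ^ 2 + 3 = 0 := by simpa using hx
    nlinarith [sq_nonneg x]

theorem natDegree_C_half_mul_X_mul_X_sq_add_three :
    (C (2 : ℚ)⁻¹ * (X * (X ^ 2 + C 3))).natDegree = 3 := by
  compute_degree!

theorem natDegree_C_quarter_mul_X_sq_mul_X_sq_add_three :
    (C (4 : ℚ)⁻¹ * (X ^ 2 * (X ^ 2 + C 3))).natDegree = 4 := by
  compute_degree!

theorem isIntValued_C_half_mul_X_mul_X_sq_add_three :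
    IsIntValued (C (2 : ℚ)⁻¹ * (X * (X ^ 2 + C 3))) := by
  intro n
  obtain ⟨k, hk⟩ : ∃ k : ℤ, n * (n ^ 2 + 3) = 2 * k := by
    rcases Int.even_or_odd' n with ⟨t, rfl | rfl⟩
    · exact ⟨t * ((2 * t) ^ 2 + 3), by ring⟩
    · exact ⟨(2 * t + 1) * (2 * t ^ 2 + 2 * t + 2), by ring⟩
  refine ⟨k, ?_⟩
  simp only [eval_mul, eval_C, eval_X, eval_add, eval_pow]
  rw [← mul_right_inj' (two_ne_zero (α := ℚ)), ← mul_assoc, mul_inv_cancel₀ two_ne_zero, one_mul]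
  exact_mod_cast hk

theorem isIntValued_C_quarter_mul_X_sq_mul_X_sq_add_three :
    IsIntValued (C (4 : ℚ)⁻¹ * (X ^ 2 * (X ^ 2 + C 3))) := by
  intro n
  obtain ⟨k, hk⟩ : ∃ k : ℤ, n ^ 2 * (n ^ 2 + 3) = 4 * k := by
    rcases Int.even_or_odd' n with ⟨t, rfl | rfl⟩
    · exact ⟨t ^ 2 * ((2 * t) ^ 2 + 3), by ring⟩
    · exact ⟨(2 * t + 1) ^ 2 * (t ^ 2 + t + 1), by ring⟩
  refine ⟨k, ?_⟩
  simp only [eval_mul, eval_C, eval_X, eval_add, eval_pow]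
  rw [← mul_right_inj' (four_ne_zero (α := ℚ)), ← mul_assoc, mul_inv_cancel₀ four_ne_zero, one_mul]
  exact_mod_cast hk

theorem isIntValued_X_sq_add_three : IsIntValued (X ^ 2 + C 3) :=
  fun n => ⟨n ^ 2 + 3, by simp⟩

section IntValued
variable (R : Subring ℚ[X]) (hR : ∀ f : ℚ[X], f ∈ R ↔ IsIntValued f)
include hR

theorem irreducible_C_half_mul_X_mul_X_sq_add_three {F : R}
    (hF : (F : ℚ[X]) = C (2 : ℚ)⁻¹ * (X * (X ^ 2 + C 3))) : Irreducible F := by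
  refine irreducible_of_isCoprime_eval_of_forall_not_split R hR
    (by rw [hF, natDegree_C_half_mul_X_mul_X_sq_add_three]; norm_num)
    ⟨1, 2, 2, 7, by rw [hF]; norm_num, by rw [hF]; norm_num,
      by norm_num [Int.isCoprime_iff_gcd_eq_one]⟩
    fun a b hab => false_of_isIntValued_of_mul_eq_C_mul_X_pow_mul prime_X_sq_add_three (k := 1)
      (r := 2⁻¹) (by norm_num) ?_ (by rw [hab, hF, pow_one])
  intro i hi j hj h₀ h₁
  interval_cases i <;> interval_cases j <;> simp only [ne_eq, not_true] at h₀ h₁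
  · exact ⟨0, 1, by
      norm_num; simpa using intCast_div_ne_intCast (a := 3) (b := 2) (by decide) (by decide)⟩
  · exact ⟨1, 0, by
      norm_num; simpa using intCast_div_ne_intCast (a := 3) (b := 2) (by decide) (by decide)⟩

theorem irreducible_C_quarter_mul_X_sq_mul_X_sq_add_three {G : R}
    (hG : (G : ℚ[X]) = C (4 : ℚ)⁻¹ * (X ^ 2 * (X ^ 2 + C 3))) : Irreducible G := by
  refine irreducible_of_isCoprime_eval_of_forall_not_split R hR
    (by rw [hG, natDegree_C_quarter_mul_X_sq_mul_X_sq_add_three]; norm_num)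
    ⟨1, 1, 1, 1, by rw [hG]; norm_num, by rw [hG]; norm_num, isCoprime_one_left⟩
    fun a b hab => false_of_isIntValued_of_mul_eq_C_mul_X_pow_mul prime_X_sq_add_three (k := 2)
      (r := 4⁻¹) (by norm_num) ?_ (by rw [hab, hG])
  intro i hi j hj h₀ h₁
  interval_cases i <;> interval_cases j <;> simp only [ne_eq, not_true] at h₀ h₁
  · exact ⟨0, 1, by
      norm_num; simpa using intCast_div_ne_intCast (a := 3) (b := 4) (by decide) (by decide)⟩
  · exact ⟨1, 2, by
      norm_num; simpa using intCast_div_ne_intCast (a := 7) (b := 2) (by decide) (by decide)⟩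
  · exact ⟨2, 1, by
      norm_num; simpa using intCast_div_ne_intCast (a := 7) (b := 2) (by decide) (by decide)⟩
  · exact ⟨1, 0, by
      norm_num; simpa using intCast_div_ne_intCast (a := 3) (b := 4) (by decide) (by decide)⟩

theorem irreducible_X_sq_add_three {H : R} (hH : (H : ℚ[X]) = X ^ 2 + C 3) : Irreducible H := by
  refine irreducible_of_isCoprime_eval_of_forall_not_split R hR
    (by rw [hH, natDegree_X_pow_add_C]; norm_num)
    ⟨0, 1, 3, 4, by rw [hH]; norm_num, by rw [hH]; norm_num,
      by norm_num [Int.isCoprime_iff_gcd_eq_one]⟩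
    fun a b hab => false_of_isIntValued_of_mul_eq_C_mul_X_pow_mul prime_X_sq_add_three (k := 0)
      (r := 1) one_ne_zero ?_ (by rw [hab, hH, C_1, one_mul, pow_zero, one_mul])
  intro i hi j hj h₀ h₁
  obtain rfl : i = 0 := by omega
  interval_cases j <;> simp at h₀ h₁

end IntValued

theorem C_quarter_mul_X_sq_mul_X_sq_add_three_mul :
    C (4 : ℚ)⁻¹ * (X ^ 2 * (X ^ 2 + C 3)) * (X ^ 2 + C 3) =
      (C (2 : ℚ)⁻¹ * (X * (X ^ 2 + C 3))) ^ 2 := by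
  rw [show (4 : ℚ)⁻¹ = 2⁻¹ ^ 2 by norm_num, C_pow]
  ring

theorem stmt_10 (R : Subring (Polynomial ℚ))
    (hR : ∀ f : Polynomial ℚ, f ∈ R ↔ ∀ n : ℤ, ∃ m : ℤ, f.eval (n : ℚ) = (m : ℚ)) :
    (Polynomial.C ((2 : ℚ))⁻¹ * (Polynomial.X * (Polynomial.X ^ 2 + Polynomial.C 3))) ∈ R ∧
    ∀ F : R, (F : Polynomial ℚ) =
        Polynomial.C ((2 : ℚ))⁻¹ * (Polynomial.X * (Polynomial.X ^ 2 + Polynomial.C 3)) →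
      Irreducible F ∧
      ∃ g h : R,
        (g : Polynomial ℚ) =
          Polynomial.C ((4 : ℚ))⁻¹ * (Polynomial.X ^ 2 * (Polynomial.X ^ 2 + Polynomial.C 3)) ∧
        (h : Polynomial ℚ) = Polynomial.X ^ 2 + Polynomial.C 3 ∧
        Irreducible g ∧ Irreducible h ∧ g * h = F ^ 2 ∧
        ¬ Multiset.Rel Associated ({g, h} : Multiset R) (Multiset.replicate 2 F) := by
  refine ⟨(hR _).2 isIntValued_C_half_mul_X_mul_X_sq_add_three, fun F hF => ?_⟩
  let g : R := ⟨_, (hR _).2 isIntValued_C_quarter_mul_X_sq_mul_X_sq_add_three⟩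
  let h : R := ⟨_, (hR _).2 isIntValued_X_sq_add_three⟩
  refine ⟨irreducible_C_half_mul_X_mul_X_sq_add_three R hR hF, g, h, rfl, rfl,
    irreducible_C_quarter_mul_X_sq_mul_X_sq_add_three R hR rfl, irreducible_X_sq_add_three R hR rfl,
    Subtype.ext ?_, ?_⟩
  · rw [Subring.coe_mul, Subring.coe_pow, hF]
    exact C_quarter_mul_X_sq_mul_X_sq_add_three_mul
  · rw [Multiset.rel_replicate_right]
    rintro ⟨-, hgF⟩
    have hdeg := natDegree_eq_of_degree_eq
      (degree_eq_degree_of_associated ((hgF g (by simp)).map R.subtype))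
    change natDegree (C (4 : ℚ)⁻¹ * _) = natDegree (F : ℚ[X]) at hdeg
    rw [hF, natDegree_C_quarter_mul_X_sq_mul_X_sq_add_three,
      natDegree_C_half_mul_X_mul_X_sq_add_three] at hdeg
    exact absurd hdeg (by norm_num)
end

section
/- Let G be an abelian group containing an element g of infinite order. In B(G), the sequences S = (3g)(−g)³, S' = (3g)²(−2g)³, and T = (−g)(−2g)(3g) are irreducible (minimal zero-sum sequences) and S·S' = T³; hence T is not absolutely irreducible. -/
/-- A minimal zero-sum sequence over the abelian group `G`. -/
def IsMinimalZeroSum {G : Type*} [AddCommGroup G] (s : Multiset G) : Prop :=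
  s ≠ 0 ∧ s.sum = 0 ∧ ∀ t : Multiset G, t ≤ s → t.sum = 0 → t = 0 ∨ t = s

/-- Absolute irreducibility in the block monoid `B(G)`. -/
def AbsIrredZS {G : Type*} [AddCommGroup G] (U : Multiset G) : Prop :=
  IsMinimalZeroSum U ∧ ∀ (n : ℕ) (L : Multiset (Multiset G)),
    (∀ t ∈ L, IsMinimalZeroSum t) → L.sum = n • U → L = Multiset.replicate n U

/-!
Since `g` has infinite order, `n ↦ n • g` is an injective homomorphism `ℤ →+ G`, and
injective homomorphisms preserve minimal zero-sum sequences. So minimality of `S`, `S'` and `T`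
reduces to minimality of `3 · (-1)³`, `3² · (-2)³` and `(-1)(-2)3` in `B(ℤ)`, a finite check
over their subsequences. The factorization `S · S' = T³` of `T³` has factors other than `T`.
-/

theorem Multiset.exists_le_and_map_eq_of_le_map {α β : Type*} {f : α → β} {s : Multiset α}
    {t : Multiset β} (h : t ≤ s.map f) : ∃ u ≤ s, u.map f = t := by
  induction s using Quotient.inductionOn
  induction t using Quotient.inductionOn
  obtain ⟨l, hperm, hsub⟩ := h
  obtain ⟨l', hl', rfl⟩ := List.sublist_map_iff.1 hsub
  exact ⟨l', hl'.subperm, Quotient.sound hperm⟩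

section

variable {G : Type*} [AddCommGroup G]

theorem isMinimalZeroSum_iff_powerset [DecidableEq G] {s : Multiset G} :
    IsMinimalZeroSum s ↔
      s ≠ 0 ∧ s.sum = 0 ∧ ∀ t ∈ s.powerset, t.sum = 0 → t = 0 ∨ t = s := by
  simp only [IsMinimalZeroSum, Multiset.mem_powerset]

instance [DecidableEq G] (s : Multiset G) : Decidable (IsMinimalZeroSum s) :=
  decidable_of_iff _ isMinimalZeroSum_iff_powerset.symm

theorem IsMinimalZeroSum.map_of_injective {H : Type*} [AddCommGroup H] {s : Multiset G}
    (hs : IsMinimalZeroSum s) {f : G →+ H} (hf : Function.Injective f) :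
    IsMinimalZeroSum (s.map f) := by
  obtain ⟨hne, hsum, hmin⟩ := hs
  refine ⟨by simpa using hne, by rw [← map_multiset_sum, hsum, map_zero], ?_⟩
  intro t ht htsum
  obtain ⟨u, hu, rfl⟩ := Multiset.exists_le_and_map_eq_of_le_map ht
  have husum : u.sum = 0 := hf (by rwa [map_zero, map_multiset_sum])
  rcases hmin u hu husum with rfl | rfl
  · exact Or.inl (Multiset.map_zero f)
  · exact Or.inr rfl

theorem not_absIrredZS_of_add_eq_nsmul {U A B : Multiset G} {n : ℕ} (hA : IsMinimalZeroSum A)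
    (hB : IsMinimalZeroSum B) (hAB : A + B = n • U) (hAU : A ≠ U) : ¬ AbsIrredZS U := by
  rintro ⟨-, habs⟩
  have hfact : {A, B} = Multiset.replicate n U :=
    habs n {A, B} (by simp [hA, hB]) (by simpa using hAB)
  exact hAU (Multiset.eq_of_mem_replicate (by rw [← hfact]; exact Multiset.mem_cons_self A {B}))

end

theorem stmt_17 {G : Type*} [AddCommGroup G] (g : G) (hg : addOrderOf g = 0) :
    IsMinimalZeroSum ((3 • g) ::ₘ Multiset.replicate 3 (-g)) ∧
    IsMinimalZeroSum (Multiset.replicate 2 (3 • g) + Multiset.replicate 3 (-(2 • g))) ∧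
    IsMinimalZeroSum ({-g, -(2 • g), 3 • g} : Multiset G) ∧
    ((3 • g) ::ₘ Multiset.replicate 3 (-g)) +
        (Multiset.replicate 2 (3 • g) + Multiset.replicate 3 (-(2 • g))) =
      3 • ({-g, -(2 • g), 3 • g} : Multiset G) ∧
    ¬ AbsIrredZS ({-g, -(2 • g), 3 • g} : Multiset G) := by
  set φ := zmultiplesHom G g
  have hφ : Function.Injective φ :=
    injective_zsmul_iff_not_isOfFinAddOrder.2 (addOrderOf_eq_zero_iff.1 hg)
  have hS : (3 • g) ::ₘ Multiset.replicate 3 (-g) =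
      ((3 : ℤ) ::ₘ Multiset.replicate 3 (-1)).map φ := by
    simp [φ, ofNat_zsmul]
  have hS' : Multiset.replicate 2 (3 • g) + Multiset.replicate 3 (-(2 • g)) =
      (Multiset.replicate 2 (3 : ℤ) + Multiset.replicate 3 (-2)).map φ := by
    simp [φ, ofNat_zsmul]
  have hT : ({-g, -(2 • g), 3 • g} : Multiset G) = ({-1, -2, 3} : Multiset ℤ).map φ := by
    simp [φ, ofNat_zsmul]
  have hSmin : IsMinimalZeroSum ((3 • g) ::ₘ Multiset.replicate 3 (-g)) :=
    hS ▸ IsMinimalZeroSum.map_of_injective (by decide) hφ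
  have hS'min :
      IsMinimalZeroSum (Multiset.replicate 2 (3 • g) + Multiset.replicate 3 (-(2 • g))) :=
    hS' ▸ IsMinimalZeroSum.map_of_injective (by decide) hφ
  have hTmin : IsMinimalZeroSum ({-g, -(2 • g), 3 • g} : Multiset G) :=
    hT ▸ IsMinimalZeroSum.map_of_injective (by decide) hφ
  have hprod : ((3 • g) ::ₘ Multiset.replicate 3 (-g)) +
      (Multiset.replicate 2 (3 • g) + Multiset.replicate 3 (-(2 • g))) =
        3 • ({-g, -(2 • g), 3 • g} : Multiset G) := by
    rw [hS, hS', hT, ← Multiset.map_add, ← Multiset.map_nsmul]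
    congr 1
    decide
  have hST : (3 • g) ::ₘ Multiset.replicate 3 (-g) ≠ {-g, -(2 • g), 3 • g} :=
    fun h ↦ by simpa using congrArg Multiset.card h
  exact ⟨hSmin, hS'min, hTmin, hprod, not_absIrredZS_of_add_eq_nsmul hSmin hS'min hprod hST⟩
end

section
/- Let n ≥ 2, G = ℤ^n with standard basis e₁,...,e_n, f = e₁ + ⋯ + e_n, and G₀ = {±e₁,...,±e_n, ±f}. Then the irreducible elements of the block monoid B(G₀) are exactly the sequences e_i(−e_i) for 1 ≤ i ≤ n, f(−f), U = e₁e₂⋯e_n(−f), and V = (−e₁)(−e₂)⋯(−e_n)f. Moreover U·V = (e₁(−e₁))⋯(e_n(−e_n))·(f(−f)), so B(G₀) is not half-factorial, and every irreducible of B(G₀) is absolutely irreducible. -/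
/-! For a zero-sum sequence `s` over `G₀`, coordinate `j` of its sum reads
`#eⱼ - #(-eⱼ) = #(-f) - #f`, where `#` counts occurrences in `s`. If the right side is positive,
every `eⱼ` and `-f` occurs, so `U ≤ s`; if it is negative, `V ≤ s`; if it is zero, some `±eⱼ` or
`±f` occurs together with its negative. Hence every nonempty zero-sum sequence contains one of the
listed atoms, and as none of them contains another, they are exactly the minimal ones.
All of them are squarefree, so a factor of `Wᵐ` has its support in that of `W`, is therefore
contained in `W`, and equals `W`: every atom is absolutely irreducible. -/

/-- A minimal zero-sum sequence over the subset `G₀` of the abelian group `G`: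
a nonempty zero-sum multiset with entries in `G₀` and no proper nonempty zero-sum
submultiset. These are the irreducibles of the block monoid `B(G₀)`. -/
def IsMinimalZeroSumOn {G : Type*} [AddCommGroup G] (G₀ : Set G) (s : Multiset G) : Prop :=
  s ≠ 0 ∧ (∀ x ∈ s, x ∈ G₀) ∧ s.sum = 0 ∧
    ∀ t : Multiset G, t ≤ s → t.sum = 0 → t = 0 ∨ t = s

/-- Absolute irreducibility in the block monoid `B(G₀)`. -/
def AbsIrredZSOn {G : Type*} [AddCommGroup G] (G₀ : Set G) (U : Multiset G) : Prop :=
  IsMinimalZeroSumOn G₀ U ∧ ∀ (n : ℕ) (L : Multiset (Multiset G)),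
    (∀ t ∈ L, IsMinimalZeroSumOn G₀ t) → L.sum = n • U → L = Multiset.replicate n U

theorem Multiset.pair_le_iff {α : Type*} {a b : α} (hab : a ≠ b) {s : Multiset α} :
    {a, b} ≤ s ↔ a ∈ s ∧ b ∈ s := by
  rw [Multiset.le_iff_subset (by simp [hab])]
  simp [Multiset.insert_eq_cons, Multiset.cons_subset]

theorem Finset.sum_univ_singleton_eq_map {ι α : Type*} [Fintype ι] (a : ι → α) :
    ∑ i, ({a i} : Multiset α) = Finset.univ.val.map a := by
  rw [Finset.sum_eq_multiset_sum]
  exact (congrArg Multiset.sum (Multiset.map_map _ a _)).symm.trans (Multiset.sum_map_singleton _)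

section ZeroSum

variable {G : Type*} [AddCommGroup G] {G₀ : Set G}

theorem isMinimalZeroSumOn_iff_mem_of_isAntichain {𝒜 : Set (Multiset G)}
    (h𝒜 : ∀ A ∈ 𝒜, A ≠ 0 ∧ (∀ x ∈ A, x ∈ G₀) ∧ A.sum = 0)
    (hanti : IsAntichain (· ≤ ·) 𝒜)
    (hle : ∀ s : Multiset G, s ≠ 0 → (∀ x ∈ s, x ∈ G₀) → s.sum = 0 → ∃ A ∈ 𝒜, A ≤ s)
    (s : Multiset G) : IsMinimalZeroSumOn G₀ s ↔ s ∈ 𝒜 := by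
  constructor
  · rintro ⟨hs0, hsG₀, hsum, hmin⟩
    obtain ⟨A, hA, hAs⟩ := hle s hs0 hsG₀ hsum
    obtain ⟨hA0, -, hAsum⟩ := h𝒜 A hA
    rwa [← (hmin A hAs hAsum).resolve_left hA0]
  · intro hs
    obtain ⟨hs0, hsG₀, hsum⟩ := h𝒜 s hs
    refine ⟨hs0, hsG₀, hsum, fun t hts htsum => or_iff_not_imp_left.2 fun ht0 => ?_⟩
    obtain ⟨A, hA, hAt⟩ := hle t ht0 (fun x hx => hsG₀ x (Multiset.mem_of_le hts hx)) htsum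
    obtain rfl : A = s := hanti.eq hA hs (hAt.trans hts)
    exact le_antisymm hts hAt

theorem absIrredZSOn_of_nodup (hnodup : ∀ t, IsMinimalZeroSumOn G₀ t → t.Nodup)
    {W : Multiset G} (hW : IsMinimalZeroSumOn G₀ W) : AbsIrredZSOn G₀ W := by
  refine ⟨hW, fun m L hL hsum => ?_⟩
  have hLW : ∀ t ∈ L, t = W := by
    intro t ht
    have hsub : t ⊆ W := fun x hx =>
      (Multiset.mem_nsmul.1 (hsum ▸ Multiset.mem_of_le (Multiset.le_sum_of_mem ht) hx)).2
    have hle : t ≤ W := (Multiset.le_iff_subset (hnodup t (hL t ht))).2 hsub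
    exact (hW.2.2.2 t hle (hL t ht).2.2.1).resolve_left (hL t ht).1
  have hrep : L = Multiset.replicate (Multiset.card L) W := Multiset.eq_replicate_card.2 hLW
  have hcard : Multiset.card L * Multiset.card W = m * Multiset.card W := by
    rw [← Multiset.card_nsmul, ← Multiset.card_nsmul, ← Multiset.sum_replicate, ← hrep, hsum]
  rw [hrep, Nat.eq_of_mul_eq_mul_right (Multiset.card_pos.2 hW.1) hcard]

end ZeroSum

/-! `Pi.single i 1` plays the role of `eᵢ` and the constant function `1` that of `f`. -/

namespace SignedBasisOnes

def G₀ (ι : Type*) [DecidableEq ι] : Set (ι → ℤ) :=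
  {x | (∃ i, x = Pi.single i 1 ∨ x = -Pi.single i 1) ∨ x = 1 ∨ x = -1}

def U (ι : Type*) [DecidableEq ι] [Fintype ι] : Multiset (ι → ℤ) :=
  -1 ::ₘ Finset.univ.val.map fun i => Pi.single i 1

def V (ι : Type*) [DecidableEq ι] [Fintype ι] : Multiset (ι → ℤ) :=
  1 ::ₘ Finset.univ.val.map fun i => -Pi.single i 1

def atoms (ι : Type*) [DecidableEq ι] [Fintype ι] : Set (Multiset (ι → ℤ)) :=
  {s | (∃ i, s = {Pi.single i 1, -Pi.single i 1}) ∨ s = {1, -1} ∨ s = U ι ∨ s = V ι}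

theorem one_ne_neg_one {ι : Type*} [Nonempty ι] : (1 : ι → ℤ) ≠ -1 := by
  intro h
  simpa using congrFun h (Classical.arbitrary ι)

variable {ι : Type*} [DecidableEq ι]

theorem single_one_inj {i j : ι} : (Pi.single i 1 : ι → ℤ) = Pi.single j 1 ↔ i = j := by
  refine ⟨fun h => ?_, fun h => h ▸ rfl⟩
  simpa [Pi.single_apply, eq_comm] using congrFun h i

theorem single_ne_neg_single (i j : ι) : (Pi.single i 1 : ι → ℤ) ≠ -Pi.single j 1 := by
  intro h
  have := congrFun h i
  simp only [Pi.single_eq_same, Pi.neg_apply, Pi.single_apply] at this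
  split_ifs at this
  omega

theorem single_ne_neg_one (i : ι) : (Pi.single i 1 : ι → ℤ) ≠ -1 := by
  intro h
  simpa using congrFun h i

theorem single_ne_one [Nontrivial ι] (i : ι) : (Pi.single i 1 : ι → ℤ) ≠ 1 := by
  obtain ⟨j, hj⟩ := exists_ne i
  intro h
  simpa [hj] using congrFun h j

variable [Fintype ι]

theorem apply_eq_of_mem_G₀ [Nontrivial ι] {x : ι → ℤ} (hx : x ∈ G₀ ι) (j : ι) :
    x j = (if Pi.single j 1 = x then 1 else 0) - (if -Pi.single j 1 = x then 1 else 0) +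
      (if 1 = x then 1 else 0) - (if -1 = x then 1 else 0) := by
  have h₁ := single_ne_neg_single (ι := ι)
  have h₂ := single_ne_one (ι := ι)
  have h₃ := single_ne_neg_one (ι := ι)
  have h₄ := one_ne_neg_one (ι := ι)
  rcases hx with ⟨i, rfl | rfl⟩ | rfl | rfl
  · simp [Pi.single_apply, single_one_inj, (h₁ _ _).symm, (h₂ _).symm, (h₃ _).symm]
  · have h₅ : (1 : ι → ℤ) ≠ -Pi.single i 1 := fun h => h₃ i (neg_eq_iff_eq_neg.mp h.symm)
    simp [Pi.single_apply, single_one_inj, h₁, neg_eq_iff_eq_neg, (h₂ _).symm, h₅]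
  · simp [h₂, neg_eq_iff_eq_neg, h₃, h₄.symm]
  · simp [h₃, neg_eq_iff_eq_neg, h₂, h₄]

theorem sum_apply_eq_count [Nontrivial ι] {s : Multiset (ι → ℤ)} (hs : ∀ x ∈ s, x ∈ G₀ ι)
    (j : ι) : s.sum j = (s.count (Pi.single j 1) : ℤ) - s.count (-Pi.single j 1) +
      s.count 1 - s.count (-1) := by
  induction s using Multiset.induction_on with
  | empty => simp
  | cons x s ih =>
    rw [Multiset.forall_mem_cons] at hs
    simp only [Multiset.sum_cons, Pi.add_apply, Multiset.count_cons, ih hs.2,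
      apply_eq_of_mem_G₀ hs.1 j]
    push_cast
    ring

theorem count_single_sub_count_neg_single [Nontrivial ι] {s : Multiset (ι → ℤ)}
    (hs : ∀ x ∈ s, x ∈ G₀ ι) (hsum : s.sum = 0) (j : ι) :
    (s.count (Pi.single j 1) : ℤ) - s.count (-Pi.single j 1) = s.count (-1) - s.count 1 := by
  have := sum_apply_eq_count hs j
  rw [hsum, Pi.zero_apply] at this
  linarith

theorem nodup_U : (U ι).Nodup :=
  Multiset.nodup_cons.2 ⟨by simp [single_ne_neg_one],
    Finset.univ.nodup.map fun _ _ h => single_one_inj.1 h⟩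

theorem nodup_V : (V ι).Nodup :=
  Multiset.nodup_cons.2 ⟨by simp [neg_eq_iff_eq_neg, single_ne_neg_one],
    Finset.univ.nodup.map fun _ _ h => single_one_inj.1 (neg_injective h)⟩

theorem U_le_iff {s : Multiset (ι → ℤ)} : U ι ≤ s ↔ -1 ∈ s ∧ ∀ i, Pi.single i 1 ∈ s := by
  rw [Multiset.le_iff_subset nodup_U]
  simp [U, Multiset.subset_iff]

theorem V_le_iff {s : Multiset (ι → ℤ)} : V ι ≤ s ↔ 1 ∈ s ∧ ∀ i, -Pi.single i 1 ∈ s := by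
  rw [Multiset.le_iff_subset nodup_V]
  simp [V, Multiset.subset_iff]

theorem sum_U : (U ι).sum = 0 := by
  rw [U, Multiset.sum_cons, ← Finset.sum_eq_multiset_sum, Finset.univ_sum_single]
  exact neg_add_cancel 1

theorem sum_V : (V ι).sum = 0 := by
  rw [V, Multiset.sum_cons, ← Finset.sum_eq_multiset_sum, Finset.sum_neg_distrib,
    Finset.univ_sum_single]
  exact add_neg_cancel 1

theorem U_add_V :
    U ι + V ι = ∑ i, ({Pi.single i 1, -Pi.single i 1} : Multiset (ι → ℤ)) + {1, -1} := by
  simp only [U, V, Multiset.insert_eq_cons, ← Multiset.singleton_add, Finset.sum_add_distrib,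
    Finset.sum_univ_singleton_eq_map]
  abel

theorem mem_atoms_isZeroSum {A : Multiset (ι → ℤ)} (hA : A ∈ atoms ι) :
    A ≠ 0 ∧ (∀ x ∈ A, x ∈ G₀ ι) ∧ A.sum = 0 := by
  rcases hA with ⟨i, rfl⟩ | rfl | rfl | rfl
  · refine ⟨by simp, fun x hx => ?_, by simp⟩
    simp only [Multiset.insert_eq_cons, Multiset.mem_cons, Multiset.mem_singleton] at hx
    exact Or.inl ⟨i, hx⟩
  · refine ⟨by simp, fun x hx => ?_, by simp⟩
    simp only [Multiset.insert_eq_cons, Multiset.mem_cons, Multiset.mem_singleton] at hx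
    exact Or.inr hx
  · refine ⟨Multiset.cons_ne_zero, fun x hx => ?_, sum_U⟩
    simp only [U, Multiset.mem_cons, Multiset.mem_map] at hx
    rcases hx with rfl | ⟨i, -, rfl⟩
    exacts [Or.inr (Or.inr rfl), Or.inl ⟨i, Or.inl rfl⟩]
  · refine ⟨Multiset.cons_ne_zero, fun x hx => ?_, sum_V⟩
    simp only [V, Multiset.mem_cons, Multiset.mem_map] at hx
    rcases hx with rfl | ⟨i, -, rfl⟩
    exacts [Or.inr (Or.inl rfl), Or.inl ⟨i, Or.inr rfl⟩]

variable [Nontrivial ι]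

theorem nodup_of_mem_atoms {A : Multiset (ι → ℤ)} (hA : A ∈ atoms ι) : A.Nodup := by
  rcases hA with ⟨i, rfl⟩ | rfl | rfl | rfl
  · simp [single_ne_neg_single]
  · simp [one_ne_neg_one]
  · exact nodup_U
  · exact nodup_V

theorem isAntichain_atoms : IsAntichain (· ≤ ·) (atoms ι) := by
  intro A hA B hB hAB hle
  refine hAB ?_
  have hsub := Multiset.subset_of_le hle
  have h₁ := single_ne_neg_single (ι := ι)
  have h₂ := single_ne_one (ι := ι)
  have h₃ := single_ne_neg_one (ι := ι)
  have h₄ := one_ne_neg_one (ι := ι)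
  have h₅ : ∀ i, -Pi.single i 1 ≠ (1 : ι → ℤ) := fun i h => h₃ i (neg_eq_iff_eq_neg.mp h)
  -- In each case some element of `A` is missing from `B`.
  rcases hA with ⟨i, rfl⟩ | rfl | rfl | rfl <;> rcases hB with ⟨j, rfl⟩ | rfl | rfl | rfl <;>
    first
    | rfl
    | simp [U, V, Multiset.insert_eq_cons, Multiset.subset_iff, single_one_inj, h₁, (h₁ _ _).symm,
        h₂, (h₂ _).symm, h₃, (h₃ _).symm, h₄, h₄.symm, h₅, (h₅ _).symm] at hsub <;>
      rw [hsub]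

theorem exists_mem_atoms_le {s : Multiset (ι → ℤ)} (hs0 : s ≠ 0) (hs : ∀ x ∈ s, x ∈ G₀ ι)
    (hsum : s.sum = 0) : ∃ A ∈ atoms ι, A ≤ s := by
  have hcount := count_single_sub_count_neg_single hs hsum
  rcases lt_trichotomy (s.count (-1)) (s.count 1) with hlt | heq | hgt
  · refine ⟨V ι, Or.inr (Or.inr (Or.inr rfl)), V_le_iff.2 ⟨?_, fun i => ?_⟩⟩
    · exact Multiset.count_pos.1 (by omega)
    · have := hcount i
      exact Multiset.count_pos.1 (by omega)
  · obtain ⟨x, hx⟩ := Multiset.exists_mem_of_ne_zero hs0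
    have hxpos := Multiset.count_pos.2 hx
    rcases hs x hx with ⟨i, rfl | rfl⟩ | rfl | rfl
    · refine ⟨_, Or.inl ⟨i, rfl⟩, (Multiset.pair_le_iff (single_ne_neg_single i i)).2 ⟨hx, ?_⟩⟩
      have := hcount i
      exact Multiset.count_pos.1 (by omega)
    · refine ⟨_, Or.inl ⟨i, rfl⟩, (Multiset.pair_le_iff (single_ne_neg_single i i)).2 ⟨?_, hx⟩⟩
      have := hcount i
      exact Multiset.count_pos.1 (by omega)
    · exact ⟨_, Or.inr (Or.inl rfl),
        (Multiset.pair_le_iff one_ne_neg_one).2 ⟨hx, Multiset.count_pos.1 (by omega)⟩⟩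
    · exact ⟨_, Or.inr (Or.inl rfl),
        (Multiset.pair_le_iff one_ne_neg_one).2 ⟨Multiset.count_pos.1 (by omega), hx⟩⟩
  · refine ⟨U ι, Or.inr (Or.inr (Or.inl rfl)), U_le_iff.2 ⟨?_, fun i => ?_⟩⟩
    · exact Multiset.count_pos.1 (by omega)
    · have := hcount i
      exact Multiset.count_pos.1 (by omega)

theorem isMinimalZeroSumOn_iff_mem_atoms (s : Multiset (ι → ℤ)) :
    IsMinimalZeroSumOn (G₀ ι) s ↔ s ∈ atoms ι :=
  isMinimalZeroSumOn_iff_mem_of_isAntichain (fun _ => mem_atoms_isZeroSum) isAntichain_atoms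
    (fun _ => exists_mem_atoms_le) s

theorem exists_factorizations_card_ne :
    ∃ L₁ L₂ : Multiset (Multiset (ι → ℤ)), (∀ t ∈ L₁, t ∈ atoms ι) ∧ (∀ t ∈ L₂, t ∈ atoms ι) ∧
      L₁.sum = L₂.sum ∧ Multiset.card L₁ ≠ Multiset.card L₂ := by
  refine ⟨{U ι, V ι}, {1, -1} ::ₘ Finset.univ.val.map fun i => {Pi.single i 1, -Pi.single i 1},
    ?_, ?_, ?_, ?_⟩
  · simp [atoms]
  · rw [Multiset.forall_mem_cons]
    refine ⟨Or.inr (Or.inl rfl), fun t ht => ?_⟩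
    obtain ⟨i, -, rfl⟩ := Multiset.mem_map.1 ht
    exact Or.inl ⟨i, rfl⟩
  · rw [Multiset.insert_eq_cons, Multiset.sum_cons, Multiset.sum_singleton, U_add_V,
      Multiset.sum_cons, ← Finset.sum_eq_multiset_sum, add_comm]
  · have := Fintype.one_lt_card (α := ι)
    simp only [Multiset.insert_eq_cons, Multiset.card_cons, Multiset.card_singleton,
      Multiset.card_map, Finset.card_val, Finset.card_univ]
    omega

end SignedBasisOnes

theorem stmt_18 (n : ℕ) (hn : 2 ≤ n)
    (e : Fin n → (Fin n → ℤ)) (he : ∀ i, e i = Pi.single i 1)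
    (f : Fin n → ℤ) (hf : f = fun _ => 1)
    (G₀ : Set (Fin n → ℤ))
    (hG₀ : G₀ = {x | (∃ i, x = e i ∨ x = -e i) ∨ x = f ∨ x = -f})
    (U V : Multiset (Fin n → ℤ))
    (hU : U = (-f) ::ₘ Multiset.map e Finset.univ.val)
    (hV : V = f ::ₘ Multiset.map (fun i => -e i) Finset.univ.val) :
    (∀ s : Multiset (Fin n → ℤ), IsMinimalZeroSumOn G₀ s ↔
      ((∃ i, s = {e i, -e i}) ∨ s = {f, -f} ∨ s = U ∨ s = V)) ∧
    U + V = (∑ i, ({e i, -e i} : Multiset (Fin n → ℤ))) + {f, -f} ∧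
    ¬ (∀ L₁ L₂ : Multiset (Multiset (Fin n → ℤ)),
        (∀ t ∈ L₁, IsMinimalZeroSumOn G₀ t) → (∀ t ∈ L₂, IsMinimalZeroSumOn G₀ t) →
        L₁.sum = L₂.sum → Multiset.card L₁ = Multiset.card L₂) ∧
    (∀ W : Multiset (Fin n → ℤ), IsMinimalZeroSumOn G₀ W → AbsIrredZSOn G₀ W) := by
  have : Nontrivial (Fin n) := Fin.nontrivial_iff_two_le.2 hn
  obtain rfl : e = fun i => Pi.single i 1 := funext he
  obtain rfl : f = 1 := hf
  obtain rfl : G₀ = SignedBasisOnes.G₀ (Fin n) := hG₀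
  obtain rfl : U = SignedBasisOnes.U (Fin n) := hU
  obtain rfl : V = SignedBasisOnes.V (Fin n) := hV
  have hatoms := SignedBasisOnes.isMinimalZeroSumOn_iff_mem_atoms (ι := Fin n)
  obtain ⟨L₁, L₂, hL₁, hL₂, hsum, hcard⟩ :=
    SignedBasisOnes.exists_factorizations_card_ne (ι := Fin n)
  refine ⟨hatoms, SignedBasisOnes.U_add_V, fun h => hcard ?_, fun W hW => ?_⟩
  · exact h L₁ L₂ (fun t ht => (hatoms t).2 (hL₁ t ht)) (fun t ht => (hatoms t).2 (hL₂ t ht)) hsum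
  · exact absIrredZSOn_of_nodup
      (fun t ht => SignedBasisOnes.nodup_of_mem_atoms ((hatoms t).1 ht)) hW
end
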